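/- Assume the 2-point Chowla-type conjecture: for every A > 0 there is a constant C_A such that |Σ_{n ≤ x} μ(n+2) μ(n+1) exp(2πinα)| ≤ C_A x/(log x)^A holds for all x ≥ 2 uniformly in all real α. Then for every a > 0, (1/x) Σ_{n ≤ x} (σ_a(n+3)/(n+3)^a) μ(n+2) μ(n+1) → 0 as x → ∞. -/

import Mathlib

open Filter

noncomputable section

/-- `σ_a(n) = ∑_{d ∣ n} d^a` for real `a`. -/
def sigmaR (a : ℝ) (n : ℕ) : ℝ :=
  ∑ d ∈ n.divisors, (d : ℝ) ^ a

/-- The 2-point Chowla type conjecture: for every `A > 0`,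
`∑_{n ≤ x} μ(n+2) μ(n+1) exp(2πinα) = O(x / (log x)^A)` uniformly in `α`. -/
def TwoPointChowla : Prop :=
  ∀ A : ℝ, 0 < A → ∃ C : ℝ, ∀ x : ℝ, 2 ≤ x → ∀ α : ℝ,
    ‖(∑ n ∈ Finset.Icc 1 ⌊x⌋₊,
        ((ArithmeticFunction.moebius (n + 2) : ℤ) : ℂ) *
          ((ArithmeticFunction.moebius (n + 1) : ℤ) : ℂ) *
          Complex.exp (2 * (Real.pi : ℂ) * Complex.I * (n : ℂ) * (α : ℂ)))‖ ≤
      C * x / Real.log x ^ A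

/-!
Since `σ_a(m) / m^a = ∑_{d ∣ m} d^{-a}`, the average is `∑_d d^{-a} T_d(x) / x`, where `T_d(x)`
sums `μ(n+2) μ(n+1)` over `n ≤ x` with `d ∣ n + 3`. Detecting `d ∣ n + 3` by the additive
characters `e(j(n+3)/d)`, the Chowla hypothesis gives `T_d(x) = O(x / log x)` for each `d`, while
the trivial bound `|T_d(x)| ≤ (x + 3)/d` provides the summable majorant `4 d^{-1-a}`; so the limit
can be taken termwise (Tannery's theorem).
-/

open Finset Complex Topology

theorem IsPrimitiveRoot.sum_pow_mul_eq_ite {R : Type*} [CommRing R] [IsDomain R] {ζ : R}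
    {d : ℕ} (hζ : IsPrimitiveRoot ζ d) (m : ℕ) :
    ∑ j ∈ range d, ζ ^ (m * j) = if d ∣ m then (d : R) else 0 := by
  simp_rw [pow_mul]
  split_ifs with h
  · simp [(hζ.pow_eq_one_iff_dvd m).2 h]
  · have hne : ζ ^ m - 1 ≠ 0 := sub_ne_zero.2 fun h' => h ((hζ.pow_eq_one_iff_dvd m).1 h')
    apply mul_right_cancel₀ hne
    rw [geom_sum_mul, ← pow_mul, pow_mul', hζ.pow_eq_one, one_pow, sub_self, zero_mul]

theorem norm_sum_filter_dvd_add_le {s : Finset ℕ} {f : ℕ → ℂ} {B : ℝ}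
    (hB : ∀ α : ℝ, ‖∑ n ∈ s, f n * exp (2 * Real.pi * I * n * α)‖ ≤ B) (k : ℕ) {d : ℕ}
    (hd : d ≠ 0) : ‖∑ n ∈ s with d ∣ n + k, f n‖ ≤ B := by
  set ζ := exp (2 * Real.pi * I / d)
  have hζ : IsPrimitiveRoot ζ d := isPrimitiveRoot_exp d hd
  have hζ_norm : ‖ζ‖ = 1 := hζ.norm'_eq_one hd
  have hpow (n j : ℕ) : ζ ^ (n * j) = exp (2 * Real.pi * I * n * ((j / d : ℝ) : ℂ)) := by
    rw [← exp_nat_mul]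
    congr 1
    push_cast
    ring
  have hfourier : (d : ℂ) * ∑ n ∈ s with d ∣ n + k, f n =
      ∑ j ∈ range d, ζ ^ (k * j) * ∑ n ∈ s, f n * ζ ^ (n * j) := by
    calc (d : ℂ) * ∑ n ∈ s with d ∣ n + k, f n
        = ∑ n ∈ s, f n * ∑ j ∈ range d, ζ ^ ((n + k) * j) := by
          simp_rw [hζ.sum_pow_mul_eq_ite, sum_filter, mul_sum, mul_ite, mul_zero, mul_comm]
      _ = _ := by
          simp_rw [mul_sum, add_mul, pow_add]
          rw [sum_comm]
          refine sum_congr rfl fun j _ => sum_congr rfl fun n _ => by ring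
  have hdpos : (0 : ℝ) < d := by positivity
  refine le_of_mul_le_mul_left ?_ hdpos
  calc (d : ℝ) * ‖∑ n ∈ s with d ∣ n + k, f n‖
      = ‖(d : ℂ) * ∑ n ∈ s with d ∣ n + k, f n‖ := by rw [norm_mul, norm_natCast]
    _ ≤ ∑ j ∈ range d, ‖ζ ^ (k * j)‖ * ‖∑ n ∈ s, f n * ζ ^ (n * j)‖ := by
        rw [hfourier]
        exact (norm_sum_le _ _).trans_eq (sum_congr rfl fun _ _ => norm_mul _ _)
    _ ≤ ∑ j ∈ range d, B := by
        refine sum_le_sum fun j _ => ?_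
        rw [norm_pow, hζ_norm, one_pow, one_mul]
        simpa only [hpow] using hB (j / d)
    _ = d * B := by rw [sum_const, card_range, nsmul_eq_mul]

theorem card_filter_dvd_add_le (N k d : ℕ) : #{n ∈ Icc 1 N | d ∣ n + k} ≤ (N + k) / d := by
  rw [← Nat.Ioc_filter_dvd_card_eq_div]
  refine card_le_card_of_injOn (· + k) (fun n hn => ?_) (fun _ _ _ _ h => Nat.add_right_cancel h)
  simp only [coe_filter, mem_Icc, Set.mem_ofPred_eq, mem_Ioc] at hn ⊢
  omega

theorem abs_sum_filter_dvd_add_le {c : ℕ → ℝ} (hc : ∀ n, |c n| ≤ 1) (N k d : ℕ) :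
    |∑ n ∈ Icc 1 N with d ∣ n + k, c n| ≤ ((N + k : ℕ) : ℝ) / d :=
  calc |∑ n ∈ Icc 1 N with d ∣ n + k, c n|
      ≤ ∑ n ∈ Icc 1 N with d ∣ n + k, (1 : ℝ) :=
        (abs_sum_le_sum_abs _ _).trans (sum_le_sum fun n _ => hc n)
    _ ≤ (((N + k) / d : ℕ) : ℝ) := by
        rw [sum_const, nsmul_one]
        exact_mod_cast card_filter_dvd_add_le N k d
    _ ≤ ((N + k : ℕ) : ℝ) / d := Nat.cast_div_le

theorem sigmaR_div_rpow {m : ℕ} (hm : m ≠ 0) (a : ℝ) :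
    sigmaR a m / (m : ℝ) ^ a = ∑ d ∈ m.divisors, (d : ℝ) ^ (-a) := by
  rw [sigmaR, ← Nat.sum_div_divisors, sum_div]
  refine sum_congr rfl fun d hd => ?_
  have hd0 : (d : ℝ) ≠ 0 := Nat.cast_ne_zero.2 (Nat.pos_of_mem_divisors hd).ne'
  have hm0 : (0 : ℝ) < m := by positivity
  rw [Nat.cast_div (Nat.dvd_of_mem_divisors hd) hd0, Real.div_rpow hm0.le (Nat.cast_nonneg d),
    Real.rpow_neg (Nat.cast_nonneg d), div_div_cancel_left' (Real.rpow_pos_of_pos hm0 a).ne']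

theorem sum_sigmaR_div_rpow_mul_eq_tsum (a : ℝ) (c : ℕ → ℝ) (k N : ℕ) :
    ∑ n ∈ Icc 1 N, sigmaR a (n + k) / ((n : ℝ) + k) ^ a * c n =
      ∑' d : ℕ, (d : ℝ) ^ (-a) * ∑ n ∈ Icc 1 N with d ∣ n + k, c n := by
  have hmem (n d : ℕ) : n ∈ Icc 1 N ∧ d ∈ (n + k).divisors ↔
      n ∈ {n ∈ Icc 1 N | d ∣ n + k} ∧ d ∈ range (N + k + 1) := by
    simp only [mem_Icc, Nat.mem_divisors, mem_filter, mem_range]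
    constructor
    · rintro ⟨hn, hdvd, -⟩
      exact ⟨⟨hn, hdvd⟩, by have := Nat.le_of_dvd (by omega) hdvd; omega⟩
    · rintro ⟨⟨hn, hdvd⟩, -⟩
      exact ⟨hn, hdvd, by omega⟩
  calc ∑ n ∈ Icc 1 N, sigmaR a (n + k) / ((n : ℝ) + k) ^ a * c n
      = ∑ n ∈ Icc 1 N, ∑ d ∈ (n + k).divisors, (d : ℝ) ^ (-a) * c n := by
        refine sum_congr rfl fun n hn => ?_
        rw [← sum_mul, ← sigmaR_div_rpow (by rw [mem_Icc] at hn; omega) a, Nat.cast_add]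
    _ = ∑ d ∈ range (N + k + 1), ∑ n ∈ Icc 1 N with d ∣ n + k, (d : ℝ) ^ (-a) * c n :=
        sum_comm' hmem
    _ = ∑' d : ℕ, (d : ℝ) ^ (-a) * ∑ n ∈ Icc 1 N with d ∣ n + k, c n := by
        simp_rw [← mul_sum]
        refine (tsum_eq_sum fun d hd => ?_).symm
        rw [sum_eq_zero fun n hn => ?_, mul_zero]
        rw [mem_filter, mem_Icc] at hn
        rw [mem_range] at hd
        exact absurd (Nat.le_of_dvd (by omega) hn.2) (by omega)

theorem tendsto_inv_mul_sum_sigmaR_div_rpow_mul {c : ℕ → ℝ} (hc : ∀ n, |c n| ≤ 1) (k : ℕ)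
    {a : ℝ} (ha : 0 < a)
    (hT : ∀ d ≠ 0, Tendsto (fun x : ℝ => (∑ n ∈ Icc 1 ⌊x⌋₊ with d ∣ n + k, c n) / x) atTop
      (𝓝 0)) :
    Tendsto (fun x : ℝ => (1 / x) * ∑ n ∈ Icc 1 ⌊x⌋₊, sigmaR a (n + k) / ((n : ℝ) + k) ^ a * c n)
      atTop (𝓝 0) := by
  simp_rw [sum_sigmaR_div_rpow_mul_eq_tsum, ← tsum_mul_left]
  rw [← tsum_zero]
  refine tendsto_tsum_of_dominated_convergence (bound := fun d : ℕ => (k + 1) * (d : ℝ) ^ (-a - 1))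
    ((Real.summable_nat_rpow.2 (by linarith)).mul_left _) (fun d => ?_) ?_
  · rcases eq_or_ne d 0 with rfl | hd
    · simp [Real.zero_rpow (neg_ne_zero.2 ha.ne')]
    · simpa [div_eq_inv_mul, mul_left_comm] using (hT d hd).const_mul ((d : ℝ) ^ (-a))
  · filter_upwards [eventually_ge_atTop 1] with x hx d
    have hx0 : 0 < x := by linarith
    have hN : ((⌊x⌋₊ + k : ℕ) : ℝ) / x ≤ k + 1 := by
      rw [div_le_iff₀ hx0, Nat.cast_add]
      nlinarith [Nat.floor_le hx0.le, (Nat.cast_nonneg k : (0 : ℝ) ≤ k)]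
    have hd : 0 ≤ (d : ℝ) ^ (-a) := by positivity
    calc ‖1 / x * ((d : ℝ) ^ (-a) * ∑ n ∈ Icc 1 ⌊x⌋₊ with d ∣ n + k, c n)‖
        = (d : ℝ) ^ (-a) * |∑ n ∈ Icc 1 ⌊x⌋₊ with d ∣ n + k, c n| / x := by
          rw [Real.norm_eq_abs, abs_mul, abs_mul, abs_of_nonneg hd, abs_of_pos (by positivity)]
          ring
      _ ≤ (d : ℝ) ^ (-a) * (((⌊x⌋₊ + k : ℕ) : ℝ) / d) / x := by
          gcongr
          exact abs_sum_filter_dvd_add_le hc _ _ _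
      _ = (d : ℝ) ^ (-a - 1) * (((⌊x⌋₊ + k : ℕ) : ℝ) / x) := by
          rw [Real.rpow_sub_one' (Nat.cast_nonneg d) (by linarith)]
          ring
      _ ≤ (k + 1) * (d : ℝ) ^ (-a - 1) := by
          rw [mul_comm]
          gcongr

theorem stmt_14 (hChowla : TwoPointChowla) (a : ℝ) (ha : 0 < a) :
    Tendsto (fun x : ℝ => (1 / x) *
        ∑ n ∈ Finset.Icc 1 ⌊x⌋₊,
          (sigmaR a (n + 3) / ((n : ℝ) + 3) ^ a) *
            ((ArithmeticFunction.moebius (n + 2) : ℤ) : ℝ) *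
            ((ArithmeticFunction.moebius (n + 1) : ℤ) : ℝ))
      atTop (nhds 0) := by
  have hμ (m : ℕ) : |((ArithmeticFunction.moebius m : ℤ) : ℝ)| ≤ 1 := by
    exact_mod_cast ArithmeticFunction.abs_moebius_le_one
  obtain ⟨C, hC⟩ := hChowla 1 one_pos
  have key := tendsto_inv_mul_sum_sigmaR_div_rpow_mul
    (c := fun n => ((ArithmeticFunction.moebius (n + 2) : ℤ) : ℝ) *
      ((ArithmeticFunction.moebius (n + 1) : ℤ) : ℝ))
    (fun n => by rw [abs_mul]; exact mul_le_one₀ (hμ _) (abs_nonneg _) (hμ _)) 3 ha ?_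
  · simpa only [mul_assoc, Nat.cast_ofNat] using key
  intro d hd
  have hlog := (Real.tendsto_log_atTop.inv_tendsto_atTop).const_mul C
  rw [mul_zero] at hlog
  refine squeeze_zero_norm' ?_ hlog
  filter_upwards [eventually_ge_atTop 2] with x hx
  have hx0 : 0 < x := by linarith
  rw [norm_div, Real.norm_of_nonneg hx0.le, div_le_iff₀ hx0, ← Complex.norm_real]
  push_cast
  calc _ ≤ C * x / Real.log x ^ (1 : ℝ) := norm_sum_filter_dvd_add_le (hC x hx) 3 hd
    _ = C * (Real.log x)⁻¹ * x := by rw [Real.rpow_one]; ring
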